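/- arXiv:1805.10646 — 9 statements merged into one kernel-verified Lean document; each statement's English description precedes it below -/
import Mathlib

section
/- The number of distinct non-empty palindromic factors of a word of length n is at most n. -/
open List

private lemma key_aux {α : Type*} {w p q : List α} {k : ℕ}
    (hp : p.reverse = p) (hq : q.reverse = q) (hpq : p <:+ q) (hne : p ≠ q)
    (hqk : q <:+ w.take k)
    (hmin : ∀ m < k, ¬ p <:+ w.take m) : False := by
  -- p is also a prefix of q
  have hpref : p <+: q := by
    rw [← List.reverse_suffix, hp, hq]; exact hpq
  obtain ⟨r, rfl⟩ := hpref
  have hr : r ≠ [] := by rintro rfl; simp at hne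
  obtain ⟨s, hs⟩ := hqk
  have hlen : s.length + p.length < k := by
    have h1 : (s ++ (p ++ r)).length = (w.take k).length := by rw [hs]
    have h2 : (w.take k).length ≤ k := by simp
    simp only [List.length_append] at h1
    have : 0 < r.length := List.length_pos_iff.mpr hr
    omega
  apply hmin (s.length + p.length) hlen
  have : (w.take k).take (s.length + p.length) = s ++ p := by
    rw [← hs, ← List.append_assoc, List.take_left' (by simp)]
  rw [List.take_take] at this
  have hmin' : min (s.length + p.length) k = s.length + p.length := by omega
  rw [hmin'] at this
  rw [this]
  exact List.suffix_append s p

/-- The number of distinct non-empty palindromic factors of a word of length n is at most n. -/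
theorem stmt_0 {α : Type*} (w : List α) (n : ℕ) (hw : w.length = n) :
    {p : List α | p ≠ [] ∧ p.reverse = p ∧ p <:+: w}.ncard ≤ n := by
  classical
  set S := {p : List α | p ≠ [] ∧ p.reverse = p ∧ p <:+: w} with hS
  have hex : ∀ p ∈ S, ∃ k, k ≤ n ∧ p <:+ w.take k := by
    rintro p ⟨hne, hpal, s, t, rfl⟩
    refine ⟨s.length + p.length, ?_, ?_⟩
    · rw [← hw]; simp
    · rw [List.take_left' (show (s ++ p).length = s.length + p.length by simp)]
      exact List.suffix_append s p
  have hex' : ∀ p ∈ S, ∃ k, p <:+ w.take k := fun p hp =>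
    (hex p hp).imp fun k hk => hk.2
  set f : List α → ℕ := fun p =>
    if h : ∃ k, p <:+ w.take k then Nat.find h else 0 with hf
  have hfspec : ∀ p ∈ S, p <:+ w.take (f p) := by
    intro p hp
    simp only [hf, dif_pos (hex' p hp)]
    exact Nat.find_spec (hex' p hp)
  have hfmin : ∀ p ∈ S, ∀ m < f p, ¬ p <:+ w.take m := by
    intro p hp m hm
    simp only [hf, dif_pos (hex' p hp)] at hm ⊢
    exact Nat.find_min (hex' p hp) hm
  have hmem : ∀ p ∈ S, f p ∈ (Finset.Icc 1 n : Finset ℕ) := by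
    intro p hp
    obtain ⟨k, hk, hsuf⟩ := hex p hp
    have h1 : f p ≤ k := by
      simp only [hf, dif_pos (hex' p hp)]
      exact Nat.find_le hsuf
    have h2 : 1 ≤ f p := by
      by_contra h
      have h0 : f p = 0 := by omega
      have := hfspec p hp
      rw [h0] at this
      simp only [List.take_zero, List.suffix_nil] at this
      exact hp.1 this
    simp [Finset.mem_Icc]; omega
  have hinj : Set.InjOn f S := by
    intro p hp q hq hfeq
    by_contra hne
    rcases List.suffix_or_suffix_of_suffix (hfspec p hp) (hfeq ▸ hfspec q hq) with h | h
    · exact key_aux hp.2.1 hq.2.1 h hne (hfeq ▸ hfspec q hq) (hfmin p hp)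
    · exact key_aux hq.2.1 hp.2.1 h (fun e => hne e.symm) (hfspec p hp)
        (fun m hm => hfmin q hq m (hfeq ▸ hm))
  calc S.ncard ≤ ((Finset.Icc 1 n : Finset ℕ) : Set ℕ).ncard := by
        exact Set.ncard_le_ncard_of_injOn f (fun a ha => by exact_mod_cast hmem a ha)
          hinj ((Finset.Icc 1 n).finite_toSet)
    _ = n := by rw [Set.ncard_coe_finset, Nat.card_Icc]; omega
end

section
/- For each position i in a word w, there is at most one palindromic factor of w whose first (leftmost) occurrence in w ends at position i. -/
private lemma stmt_3_aux {α : Type*} (w : List α) (i : ℕ) (p q : List α)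
    (hpal : p.reverse = p) (hqal : q.reverse = q)
    (hlt : p.length < q.length)
    (hps : p <:+ w.take i)
    (hpf : ∀ j < i, ¬ p <:+ w.take j)
    (hqs : q <:+ w.take i) : False := by
  set t := w.take i with ht
  -- p is a suffix of q
  have hsuf : p <:+ q := by
    have h1 : p.reverse <+: t.reverse := List.reverse_prefix.mpr hps
    have h2 : q.reverse <+: t.reverse := List.reverse_prefix.mpr hqs
    exact List.reverse_prefix.mp
      (List.prefix_of_prefix_length_le h1 h2 (by simpa using hlt.le))
  -- hence p is a prefix of q by palindromicity
  have hpre : p <+: q := by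
    have := List.reverse_prefix.mpr hsuf
    rwa [hpal, hqal] at this
  obtain ⟨r, hr⟩ := hpre   -- p ++ r = q
  obtain ⟨s, hs⟩ := hqs    -- s ++ q = t
  have hrlen : 0 < r.length := by
    have := congrArg List.length hr
    simp at this; omega
  have htlen : t.length ≤ i := by
    rw [ht, List.length_take]; omega
  set j := s.length + p.length with hj
  have hji : j < i := by
    have := congrArg List.length hs
    simp at this
    have hql := congrArg List.length hr
    simp at hql
    omega
  have htake : w.take j = s ++ p := by
    have h1 : t = (s ++ p) ++ r := by rw [← hr] at hs; rw [← hs]; simp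
    have h2 : t.take j = s ++ p := by
      rw [h1, List.take_append_of_le_length (by simp [hj])]
      simp [hj]
    calc w.take j = (w.take i).take j := by rw [List.take_take, min_eq_left hji.le]
    _ = s ++ p := by rw [← ht, h2]
  exact hpf j hji (htake ▸ ⟨s, rfl⟩)

/-- For each position i in a word w, there is at most one palindromic factor of w
whose first (leftmost) occurrence in w ends at position i. -/
theorem stmt_3 {α : Type*} (w : List α) (i : ℕ) (p q : List α)
    (hp : p ≠ [] ∧ p.reverse = p) (hq : q ≠ [] ∧ q.reverse = q)
    (hpi : p <:+ w.take i ∧ ∀ j < i, ¬ p <:+ w.take j)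
    (hqi : q <:+ w.take i ∧ ∀ j < i, ¬ q <:+ w.take j) :
    p = q := by
  rcases lt_trichotomy p.length q.length with h | h | h
  · exact absurd (stmt_3_aux w i p q hp.2 hq.2 h hpi.1 hpi.2 hqi.1) (fun x => x)
  · -- equal lengths: two suffixes of the same list with equal length coincide
    have h1 : p.reverse <+: (w.take i).reverse := List.reverse_prefix.mpr hpi.1
    have h2 : q.reverse <+: (w.take i).reverse := List.reverse_prefix.mpr hqi.1
    have := List.prefix_of_prefix_length_le h1 h2 (by simpa using h.le)
    have := this.eq_of_length (by simpa using h)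
    simpa using congrArg List.reverse this
  · exact absurd (stmt_3_aux w i q p hq.2 hp.2 h hqi.1 hqi.2 hpi.1) (fun x => x)
end

section
/- An edge-labelled starlike tree with branches b_1, b_2, ..., b_k, where |b_1| ≥ |b_2| ≥ ... ≥ |b_k|, contains at most |b_1| + Σ_{i=2}^{k} (i-1)|b_i| distinct non-empty palindromes. -/
section Aux

variable {α : Type*} [DecidableEq α]

/-- The finset of nonempty palindromic factors of `w`. -/
def palFin (w : List α) : Finset (List α) :=
  ((w.tails.flatMap List.inits).toFinset).filter (fun p => p ≠ [] ∧ p.reverse = p)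

lemma mem_palFin {w p : List α} :
    p ∈ palFin w ↔ p ≠ [] ∧ p.reverse = p ∧ p <:+: w := by
  simp only [palFin, Finset.mem_filter, List.mem_toFinset, List.mem_flatMap,
    List.mem_tails, List.mem_inits, List.infix_iff_prefix_suffix]
  tauto

lemma palFin_nil : (palFin ([] : List α)) = ∅ := by
  ext p
  simp only [mem_palFin, Finset.notMem_empty, iff_false]
  rintro ⟨hne, -, hinf⟩
  exact hne (List.eq_nil_of_infix_nil hinf)

lemma infix_concat_cases {p w : List α} {a : α}
    (h : p <:+: w ++ [a]) : p <:+: w ∨ p <:+ w ++ [a] := by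
  obtain ⟨s, t, hst⟩ := h
  rcases t.eq_nil_or_concat with rfl | ⟨t', c, rfl⟩
  · right; exact ⟨s, by simpa using hst⟩
  · left
    have h2 : (s ++ p ++ t') ++ [c] = w ++ [a] := by
      simpa [List.concat_eq_append, List.append_assoc] using hst
    have h3 := (List.append_inj' h2 rfl).1
    exact ⟨s, t', h3⟩

lemma prefix_of_pal_suffix {p q : List α} (hp : p.reverse = p) (hq : q.reverse = q)
    (h : p <:+ q) : p <+: q := by
  rw [← hp, ← hq]
  exact List.reverse_prefix.mpr h

/-- At most one new palindrome appears when appending one letter. -/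
lemma card_palFin_concat (w : List α) (a : α) :
    (palFin (w ++ [a]) \ palFin w).card ≤ 1 := by
  rw [Finset.card_le_one]
  have key : ∀ p ∈ palFin (w ++ [a]) \ palFin w, p <:+ w ++ [a] ∧ p ≠ [] ∧ p.reverse = p ∧
      ¬ p <:+: w := by
    intro p hp
    rw [Finset.mem_sdiff, mem_palFin, mem_palFin] at hp
    obtain ⟨⟨hne, hrev, hinf⟩, hnot⟩ := hp
    have hninf : ¬ p <:+: w := fun h => hnot ⟨hne, hrev, h⟩
    rcases infix_concat_cases hinf with h | h
    · exact absurd h hninf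
    · exact ⟨h, hne, hrev, hninf⟩
  -- any shorter palindromic suffix occurs earlier
  have main : ∀ p q : List α, p <:+ w ++ [a] → q <:+ w ++ [a] →
      p.reverse = p → q.reverse = q → ¬ p <:+: w → p <:+ q → p = q := by
    intro p q hps hqs hpr2 hqr hpn hpq
    by_contra hne
    have hlt : p.length < q.length :=
      lt_of_le_of_ne hpq.length_le (fun h => hne (hpq.eq_of_length h))
    obtain ⟨r, hr⟩ := prefix_of_pal_suffix hpr2 hqr hpq
    obtain ⟨v, hv⟩ := hqs
    have hrne : r ≠ [] := by
      rintro rfl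
      simp only [List.append_nil] at hr
      exact hne hr
    rcases r.eq_nil_or_concat with rfl | ⟨r', c, rfl⟩
    · exact hrne rfl
    · apply hpn
      have h2 : (v ++ p ++ r') ++ [c] = w ++ [a] := by
        rw [← hv, ← hr]; simp [List.concat_eq_append, List.append_assoc]
      exact ⟨v, r', (List.append_inj' h2 rfl).1⟩
  intro p hp q hq
  obtain ⟨hps, hpne, hpr, hpn⟩ := key p hp
  obtain ⟨hqs, hqne, hqr, hqn⟩ := key q hq
  rcases List.suffix_or_suffix_of_suffix hps hqs with h | h
  · exact main p q hps hqs hpr hqr hpn h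
  · exact (main q p hqs hps hqr hpr hqn h).symm

/-- The number of palindromic factors of `u ++ v` that are not factors of `u`
is at most `|v|`. -/
lemma card_palFin_diff (u v : List α) :
    (palFin (u ++ v) \ palFin u).card ≤ v.length := by
  induction v using List.reverseRecOn with
  | nil => simp
  | append_singleton v a ih =>
    have hsub : palFin (u ++ (v ++ [a])) \ palFin u ⊆
        (palFin ((u ++ v) ++ [a]) \ palFin (u ++ v)) ∪ (palFin (u ++ v) \ palFin u) := by
      intro p hp
      rw [Finset.mem_sdiff] at hp
      rw [Finset.mem_union, Finset.mem_sdiff, Finset.mem_sdiff]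
      by_cases h : p ∈ palFin (u ++ v)
      · exact Or.inr ⟨h, hp.2⟩
      · exact Or.inl ⟨by rw [List.append_assoc]; exact hp.1, h⟩
    calc (palFin (u ++ (v ++ [a])) \ palFin u).card
        ≤ ((palFin ((u ++ v) ++ [a]) \ palFin (u ++ v)) ∪
            (palFin (u ++ v) \ palFin u)).card := Finset.card_le_card hsub
      _ ≤ _ + _ := Finset.card_union_le _ _
      _ ≤ 1 + v.length := Nat.add_le_add (card_palFin_concat _ _) ih
      _ ≤ (v ++ [a]).length := by simp; omega

lemma card_palFin_le (w : List α) : (palFin w).card ≤ w.length := by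
  have := card_palFin_diff ([] : List α) w
  simpa [palFin_nil] using this

lemma pal_infix_of_infix_reverse {p w : List α} (hp : p.reverse = p)
    (h : p <:+: w.reverse) : p <:+: w := by
  rw [← hp] at h
  rwa [List.reverse_infix] at h

end Aux

/-- An edge-labelled starlike tree with branches b_1, ..., b_k, where
|b_1| ≥ |b_2| ≥ ... ≥ |b_k|, contains at most |b_1| + Σ_{i=2}^{k} (i-1)|b_i|
distinct non-empty palindromes. -/
theorem stmt_6 {α : Type*} (k : ℕ) (hk : 3 ≤ k) (b : Fin k → List α)
    (hmono : ∀ i j : Fin k, i ≤ j → (b j).length ≤ (b i).length) :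
    {p : List α | p ≠ [] ∧ p.reverse = p ∧
        ∃ i j : Fin k, i < j ∧ p <:+: (b i).reverse ++ b j}.ncard ≤
      (b ⟨0, by omega⟩).length + ∑ i : Fin k, (i : ℕ) * (b i).length := by
  classical
  set i0 : Fin k := ⟨0, by omega⟩ with hi0
  -- the covering finset
  set D : Fin k → Fin k → Finset (List α) :=
    fun i j => palFin ((b i).reverse ++ b j) \ palFin ((b i).reverse) with hD
  set F : Finset (List α) :=
    palFin ((b i0).reverse) ∪
      Finset.univ.biUnion (fun j : Fin k =>
        (Finset.univ.filter (fun i : Fin k => i < j)).biUnion (fun i => D i j)) with hF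
  -- the set is contained in F
  have hmemD : ∀ (i j : Fin k) (p : List α), p ≠ [] → p.reverse = p →
      p <:+: (b i).reverse ++ b j → ¬ p <:+: (b i).reverse → p ∈ D i j := by
    intro i j p hne hrev hinf hnot
    rw [hD, Finset.mem_sdiff, mem_palFin, mem_palFin]
    exact ⟨⟨hne, hrev, hinf⟩, fun h => hnot h.2.2⟩
  have hsub : {p : List α | p ≠ [] ∧ p.reverse = p ∧
      ∃ i j : Fin k, i < j ∧ p <:+: (b i).reverse ++ b j} ⊆ ↑F := by
    rintro p ⟨hne, hrev, i, j, hij, hinf⟩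
    rw [Finset.mem_coe, hF, Finset.mem_union, Finset.mem_biUnion]
    by_cases h0 : p <:+: (b i0).reverse
    · left; rw [mem_palFin]; exact ⟨hne, hrev, h0⟩
    · right
      by_cases hi : p <:+: (b i).reverse
      · -- then p is a factor of b i, and i ≠ i0; use pair (i0, i)
        have hpbi : p <:+: b i := pal_infix_of_infix_reverse hrev hi
        have hii0 : i0 < i := by
          rcases Nat.eq_zero_or_pos i.val with hz | hpos
          · exfalso
            apply h0
            have : i = i0 := by ext; simp [hi0, hz]
            rw [← this]
            exact hi
          · exact hpos
        refine ⟨i, Finset.mem_univ i, Finset.mem_biUnion.mpr ⟨i0, ?_, ?_⟩⟩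
        · simp [hii0]
        · exact hmemD i0 i p hne hrev (hpbi.trans (List.suffix_append _ _).isInfix) h0
      · refine ⟨j, Finset.mem_univ j, Finset.mem_biUnion.mpr ⟨i, ?_, ?_⟩⟩
        · simp [hij]
        · exact hmemD i j p hne hrev hinf hi
  -- cardinality bound on F
  have hcard : F.card ≤ (b i0).length + ∑ i : Fin k, (i : ℕ) * (b i).length := by
    calc F.card ≤ (palFin ((b i0).reverse)).card +
        (Finset.univ.biUnion (fun j : Fin k =>
          (Finset.univ.filter (fun i : Fin k => i < j)).biUnion (fun i => D i j))).card :=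
          Finset.card_union_le _ _
      _ ≤ (b i0).length + ∑ j : Fin k, (j : ℕ) * (b j).length := by
          apply Nat.add_le_add
          · simpa using card_palFin_le ((b i0).reverse)
          · calc (Finset.univ.biUnion (fun j : Fin k =>
                (Finset.univ.filter (fun i : Fin k => i < j)).biUnion (fun i => D i j))).card
                ≤ ∑ j : Fin k, ((Finset.univ.filter (fun i : Fin k => i < j)).biUnion
                    (fun i => D i j)).card := Finset.card_biUnion_le
              _ ≤ ∑ j : Fin k, (j : ℕ) * (b j).length := by
                  apply Finset.sum_le_sum
                  intro j _
                  calc ((Finset.univ.filter (fun i : Fin k => i < j)).biUnion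
                      (fun i => D i j)).card
                      ≤ ∑ i ∈ Finset.univ.filter (fun i : Fin k => i < j), (D i j).card :=
                        Finset.card_biUnion_le
                    _ ≤ ∑ _i ∈ Finset.univ.filter (fun i : Fin k => i < j), (b j).length := by
                        apply Finset.sum_le_sum
                        intro i _
                        simpa using card_palFin_diff ((b i).reverse) (b j)
                    _ = (Finset.univ.filter (fun i : Fin k => i < j)).card * (b j).length := by
                        rw [Finset.sum_const, smul_eq_mul]
                    _ = (j : ℕ) * (b j).length := by
                        congr 1
                        have : Finset.univ.filter (fun i : Fin k => i < j) = Finset.Iio j := by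
                          ext x; simp
                        rw [this, Fin.card_Iio]
  calc {p : List α | p ≠ [] ∧ p.reverse = p ∧
        ∃ i j : Fin k, i < j ∧ p <:+: (b i).reverse ++ b j}.ncard
      ≤ (↑F : Set (List α)).ncard := Set.ncard_le_ncard hsub F.finite_toSet
    _ = F.card := Set.ncard_coe_finset F
    _ ≤ _ := hcard
end

section
/- The number of distinct non-empty palindromes in a (k,n)-starlike tree, i.e., a starlike tree with k branches each of length n, is at most (1 + C(k,2))·n, where C(k,2) = k(k-1)/2. -/
namespace StarAux

variable {α : Type*}

lemma occ_exists_lt {p w : List α} (h : p <:+: w) (hp : p ≠ []) :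
    ∃ e, e < w.length ∧ p <:+ w.take (e + 1) := by
  obtain ⟨s, t, rfl⟩ := h
  have h1 : 1 ≤ p.length := by
    cases p with
    | nil => exact absurd rfl hp
    | cons a l => simp
  refine ⟨s.length + p.length - 1, ?_, ?_⟩
  · simp only [List.length_append]
    omega
  · have h2 : s.length + p.length - 1 + 1 = (s ++ p).length := by
      simp only [List.length_append]; omega
    rw [h2, List.take_left]
    exact List.suffix_append s p

lemma occ_exists {p w : List α} (h : p <:+: w) : ∃ e, p <:+ w.take (e + 1) := by
  rcases eq_or_ne p [] with rfl | hp
  · exact ⟨0, List.nil_suffix⟩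
  · obtain ⟨e, _, he⟩ := occ_exists_lt h hp
    exact ⟨e, he⟩

noncomputable def fE {p w : List α} (h : ∃ e, p <:+ w.take (e + 1)) : ℕ :=
  @Nat.find _ (Classical.decPred _) h

lemma fE_spec {p w : List α} (h : ∃ e, p <:+ w.take (e + 1)) : p <:+ w.take (fE h + 1) :=
  @Nat.find_spec _ (Classical.decPred _) h

lemma fE_min {p w : List α} (h : ∃ e, p <:+ w.take (e + 1)) {m : ℕ} (hm : m < fE h) :
    ¬ p <:+ w.take (m + 1) :=
  @Nat.find_min _ (Classical.decPred _) h _ hm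

lemma fE_le {p w : List α} (h : ∃ e, p <:+ w.take (e + 1)) {m : ℕ}
    (hm : p <:+ w.take (m + 1)) : fE h ≤ m :=
  @Nat.find_min' _ (Classical.decPred _) h _ hm

lemma infix_of_occ {p w : List α} (h : ∃ e, p <:+ w.take (e + 1)) : p <:+: w :=
  (fE_spec h).isInfix.trans (List.take_prefix _ _).isInfix

lemma fE_lt_length {p w : List α} (hp : p ≠ []) (hinf : p <:+: w)
    (h : ∃ e, p <:+ w.take (e + 1)) : fE h < w.length := by
  obtain ⟨e, he, hocc⟩ := occ_exists_lt hinf hp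
  exact lt_of_le_of_lt (fE_le h hocc) he

lemma eq_of_suffix_firstEnd {p q w : List α} (hp : p.reverse = p) (hq : q.reverse = q)
    (hpne : p ≠ []) (hep : ∃ e, p <:+ w.take (e + 1)) (heq : ∃ e, q <:+ w.take (e + 1))
    (hfind : fE hep = fE heq) (hsub : p <:+ q) : p = q := by
  have hpre : p <+: q := by
    rw [← List.reverse_suffix, hp, hq]; exact hsub
  obtain ⟨r, hr⟩ := hpre
  rcases eq_or_ne r [] with rfl | hrne
  · simpa using hr
  · exfalso
    have hqocc : q <:+ w.take (fE heq + 1) := fE_spec heq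
    obtain ⟨s, hs⟩ := hqocc
    have hlen : s.length + q.length ≤ fE heq + 1 := by
      have h2 := congrArg List.length hs
      simp only [List.length_append, List.length_take] at h2
      omega
    have hm1 : 1 ≤ p.length := by
      cases p with
      | nil => exact absurd rfl hpne
      | cons a l => simp
    have hr1 : 1 ≤ r.length := by
      cases r with
      | nil => exact absurd rfl hrne
      | cons a l => simp
    have hql : q.length = p.length + r.length := by
      rw [← hr]; simp
    have hkey : p <:+ w.take (s.length + p.length) := by
      have h2 : (w.take (fE heq + 1)).take (s.length + p.length)
          = w.take (s.length + p.length) := by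
        rw [List.take_take]
        congr 1
        omega
      rw [← h2, ← hs, ← hr, ← List.append_assoc]
      have h3 : s.length + p.length = (s ++ p).length := by simp
      rw [h3, List.take_left]
      exact List.suffix_append s p
    have hlt : s.length + p.length - 1 < fE hep := by
      rw [hfind]; omega
    refine fE_min hep hlt ?_
    have h4 : s.length + p.length - 1 + 1 = s.length + p.length := by omega
    rw [h4]; exact hkey

lemma fE_inj {p q w : List α} (hp : p.reverse = p) (hq : q.reverse = q)
    (hpne : p ≠ []) (hqne : q ≠ [])
    (hep : ∃ e, p <:+ w.take (e + 1)) (heq : ∃ e, q <:+ w.take (e + 1))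
    (hfind : fE hep = fE heq) : p = q := by
  have hps : p <:+ w.take (fE hep + 1) := fE_spec hep
  have hqs : q <:+ w.take (fE hep + 1) := by rw [hfind]; exact fE_spec heq
  rcases List.suffix_or_suffix_of_suffix hps hqs with h | h
  · exact eq_of_suffix_firstEnd hp hq hpne hep heq hfind h
  · exact (eq_of_suffix_firstEnd hq hp hqne heq hep hfind.symm h).symm

lemma pair_of_pair_eq {k : ℕ} {i j i' j' : Fin k} (hij : i < j) (hij' : i' < j')
    (h : ({i, j} : Finset (Fin k)) = {i', j'}) : i = i' ∧ j = j' := by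
  have hi : i ∈ ({i', j'} : Finset (Fin k)) := by rw [← h]; simp
  have hj : j ∈ ({i', j'} : Finset (Fin k)) := by rw [← h]; simp
  have hi' : i' ∈ ({i, j} : Finset (Fin k)) := by rw [h]; simp
  have hj' : j' ∈ ({i, j} : Finset (Fin k)) := by rw [h]; simp
  simp only [Finset.mem_insert, Finset.mem_singleton] at hi hj hi' hj'
  have v1 : (i : ℕ) < j := hij
  have v2 : (i' : ℕ) < j' := hij'
  have e1 : (i : ℕ) = i' ∨ (i : ℕ) = j' := by rcases hi with h1 | h1 <;> simp [h1]
  have e2 : (j : ℕ) = i' ∨ (j : ℕ) = j' := by rcases hj with h1 | h1 <;> simp [h1]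
  have e3 : (i' : ℕ) = i ∨ (i' : ℕ) = j := by rcases hi' with h1 | h1 <;> simp [h1]
  have e4 : (j' : ℕ) = i ∨ (j' : ℕ) = j := by rcases hj' with h1 | h1 <;> simp [h1]
  refine ⟨Fin.ext ?_, Fin.ext ?_⟩ <;>
    (rcases e1 with h1 | h1 <;> rcases e2 with h2 | h2 <;>
      rcases e3 with h3 | h3 <;> rcases e4 with h4 | h4 <;> omega)

open Classical in
noncomputable def treeF (k n : ℕ) (hk0 : 0 < k) (b : Fin k → List α) (p : List α) :
    ℕ ⊕ (Finset (Fin k) × ℕ) :=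
  if h0 : ∃ e, p <:+ ((b ⟨0, hk0⟩).reverse).take (e + 1) then Sum.inl (fE h0)
  else if h1 : ∃ m, ∃ i j : Fin k,
      ((j : ℕ) + k * (i : ℕ) = m ∧ i < j ∧ p <:+: (b i).reverse ++ b j) then
    Sum.inr ({(Nat.find_spec h1).choose, (Nat.find_spec h1).choose_spec.choose},
      fE (occ_exists (Nat.find_spec h1).choose_spec.choose_spec.2.2) - n)
  else Sum.inl 0

open Classical in
lemma case1 {k n : ℕ} (hk0 : 0 < k) (b : Fin k → List α) {p : List α}
    (h0 : ∃ e, p <:+ ((b ⟨0, hk0⟩).reverse).take (e + 1)) :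
    treeF k n hk0 b p = Sum.inl (fE h0) := by
  rw [treeF, dif_pos h0]

open Classical in
lemma case2 {k n : ℕ} (hk : 3 ≤ k) {b : Fin k → List α}
    (hlen : ∀ i, (b i).length = n) (hk0 : 0 < k) {p : List α}
    (hpne : p ≠ []) (hpal : p.reverse = p)
    (hex : ∃ i j : Fin k, i < j ∧ p <:+: (b i).reverse ++ b j)
    (h0 : ¬ ∃ e, p <:+ ((b ⟨0, hk0⟩).reverse).take (e + 1)) :
    ∃ i j : Fin k, i < j ∧
      ∃ hocc : ∃ e, p <:+ ((b i).reverse ++ b j).take (e + 1),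
        treeF k n hk0 b p = Sum.inr ({i, j}, fE hocc - n) ∧ n ≤ fE hocc := by
  have h1 : ∃ m, ∃ i j : Fin k,
      ((j : ℕ) + k * (i : ℕ) = m ∧ i < j ∧ p <:+: (b i).reverse ++ b j) := by
    obtain ⟨i, j, hij, hinf⟩ := hex
    exact ⟨_, i, j, rfl, hij, hinf⟩
  have hspec := (Nat.find_spec h1).choose_spec.choose_spec
  set I := (Nat.find_spec h1).choose with hI
  set J := (Nat.find_spec h1).choose_spec.choose with hJ
  have hocc : ∃ e, p <:+ ((b I).reverse ++ b J).take (e + 1) := occ_exists hspec.2.2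
  refine ⟨I, J, hspec.2.1, hocc, ?_, ?_⟩
  · rw [treeF, dif_neg h0, dif_pos h1]
  · by_contra hlt
    push_neg at hlt
    have hocc1 : p <:+ ((b I).reverse ++ b J).take (fE hocc + 1) := fE_spec hocc
    have htake : ((b I).reverse ++ b J).take (fE hocc + 1)
        = ((b I).reverse).take (fE hocc + 1) := by
      apply List.take_append_of_le_length
      simp only [List.length_reverse, hlen]
      omega
    rw [htake] at hocc1
    have hinfI : p <:+: (b I).reverse :=
      hocc1.isInfix.trans (List.take_prefix _ _).isInfix
    by_cases hI0 : I = ⟨0, hk0⟩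
    · exact h0 ⟨fE hocc, by rw [← hI0]; exact hocc1⟩
    · have hIpos : 0 < (I : ℕ) := by
        rcases Nat.eq_zero_or_pos (I : ℕ) with h | h
        · exact absurd (Fin.ext h) hI0
        · exact h
      have hinfbI : p <:+: b I := by
        refine List.reverse_infix.mp ?_
        rw [hpal]; exact hinfI
      have hE0 : ∃ i j : Fin k,
          ((j : ℕ) + k * (i : ℕ) = (I : ℕ) ∧ i < j ∧ p <:+: (b i).reverse ++ b j) := by
        refine ⟨⟨0, hk0⟩, I, by simp, ?_, ?_⟩
        · exact Fin.lt_def.mpr (by simpa using hIpos)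
        · exact hinfbI.trans (List.suffix_append _ _).isInfix
      have hle : Nat.find h1 ≤ (I : ℕ) := Nat.find_min' h1 hE0
      have h3 : 3 * (I : ℕ) ≤ k * (I : ℕ) := Nat.mul_le_mul_right _ hk
      have heq1 : (J : ℕ) + k * (I : ℕ) = Nat.find h1 := hspec.1
      omega

end StarAux

/-- The number of distinct non-empty palindromes in a (k,n)-starlike tree
is at most (1 + C(k,2))·n. -/
theorem stmt_7 {α : Type*} (k n : ℕ) (hk : 3 ≤ k) (b : Fin k → List α)
    (hlen : ∀ i, (b i).length = n) :
    {p : List α | p ≠ [] ∧ p.reverse = p ∧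
        ∃ i j : Fin k, i < j ∧ p <:+: (b i).reverse ++ b j}.ncard ≤
      (1 + k.choose 2) * n := by
  classical
  have hk0 : 0 < k := by omega
  set T : Finset (ℕ ⊕ (Finset (Fin k) × ℕ)) :=
    (Finset.range n).image Sum.inl ∪
      (((Finset.univ : Finset (Fin k)).powersetCard 2) ×ˢ Finset.range n).image Sum.inr
    with hT
  have hdisj : Disjoint ((Finset.range n).image Sum.inl)
      ((((Finset.univ : Finset (Fin k)).powersetCard 2) ×ˢ Finset.range n).image Sum.inr) := by
    simp [Finset.disjoint_left]
  have hTcard : T.card = (1 + k.choose 2) * n := by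
    rw [hT, Finset.card_union_of_disjoint hdisj,
      Finset.card_image_of_injective _ Sum.inl_injective,
      Finset.card_image_of_injective _ Sum.inr_injective, Finset.card_range,
      Finset.card_product, Finset.card_powersetCard, Finset.card_range, Finset.card_univ,
      Fintype.card_fin]
    ring
  have hmaps : ∀ p ∈ {p : List α | p ≠ [] ∧ p.reverse = p ∧
      ∃ i j : Fin k, i < j ∧ p <:+: (b i).reverse ++ b j},
      StarAux.treeF k n hk0 b p ∈ (↑T : Set (ℕ ⊕ (Finset (Fin k) × ℕ))) := by
    rintro p ⟨hpne, hpal, hex⟩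
    by_cases h0 : ∃ e, p <:+ ((b ⟨0, hk0⟩).reverse).take (e + 1)
    · rw [StarAux.case1 hk0 b h0]
      have hfe : StarAux.fE h0 < n := by
        have h2 := StarAux.fE_lt_length hpne (StarAux.infix_of_occ h0) h0
        simpa [hlen] using h2
      simp only [hT, Finset.coe_union, Set.mem_union, Finset.mem_coe, Finset.mem_image,
        Finset.mem_range]
      exact Or.inl ⟨_, hfe, rfl⟩
    · obtain ⟨i, j, hij, hocc, hfeq, hge⟩ :=
        StarAux.case2 hk hlen hk0 hpne hpal hex h0
      rw [hfeq]
      have hlt : StarAux.fE hocc < n + n := by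
        have h2 := StarAux.fE_lt_length hpne (StarAux.infix_of_occ hocc) hocc
        simpa [hlen] using h2
      simp only [hT, Finset.coe_union, Set.mem_union, Finset.mem_coe, Finset.mem_image,
        Finset.mem_range]
      refine Or.inr ⟨({i, j}, StarAux.fE hocc - n), ?_, rfl⟩
      rw [Finset.mem_product]
      refine ⟨Finset.mem_powersetCard.mpr ⟨Finset.subset_univ _, Finset.card_pair hij.ne⟩, ?_⟩
      rw [Finset.mem_range]
      omega
  have hinj : Set.InjOn (StarAux.treeF k n hk0 b) {p : List α | p ≠ [] ∧ p.reverse = p ∧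
      ∃ i j : Fin k, i < j ∧ p <:+: (b i).reverse ++ b j} := by
    rintro p ⟨hpne, hpal, hexp⟩ q ⟨hqne, hqal, hexq⟩ hfpq
    by_cases h0p : ∃ e, p <:+ ((b ⟨0, hk0⟩).reverse).take (e + 1) <;>
      by_cases h0q : ∃ e, q <:+ ((b ⟨0, hk0⟩).reverse).take (e + 1)
    · rw [StarAux.case1 hk0 b h0p, StarAux.case1 hk0 b h0q] at hfpq
      exact StarAux.fE_inj hpal hqal hpne hqne h0p h0q (Sum.inl_injective hfpq)
    · obtain ⟨i, j, hij, hocc, hfeq, hge⟩ := StarAux.case2 hk hlen hk0 hqne hqal hexq h0q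
      rw [StarAux.case1 hk0 b h0p, hfeq] at hfpq
      exact absurd hfpq (by simp)
    · obtain ⟨i, j, hij, hocc, hfeq, hge⟩ := StarAux.case2 hk hlen hk0 hpne hpal hexp h0p
      rw [StarAux.case1 hk0 b h0q, hfeq] at hfpq
      exact absurd hfpq (by simp)
    · obtain ⟨i, j, hij, hocc, hfeq, hge⟩ := StarAux.case2 hk hlen hk0 hpne hpal hexp h0p
      obtain ⟨i', j', hij', hocc', hfeq', hge'⟩ := StarAux.case2 hk hlen hk0 hqne hqal hexq h0q
      rw [hfeq, hfeq'] at hfpq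
      have hps := Sum.inr_injective hfpq
      rw [Prod.mk.injEq] at hps
      obtain ⟨hset, hval⟩ := hps
      obtain ⟨h1, h2⟩ := StarAux.pair_of_pair_eq hij hij' hset
      subst h1; subst h2
      have hval' : StarAux.fE hocc = StarAux.fE hocc' := by omega
      exact StarAux.fE_inj hpal hqal hpne hqne hocc hocc' hval'
  have key := Set.ncard_le_ncard_of_injOn (StarAux.treeF k n hk0 b) hmaps hinj
    (Finset.finite_toSet T)
  rw [Set.ncard_coe_finset, hTcard] at key
  exact key
end

section
/- The number of distinct non-empty palindromes in a starlike tree with three branches each of length n is at most 4n. -/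
section Stmt8Aux

variable {α : Type*}

private lemma exists_suffix_take {p w : List α} (h : p <:+: w) :
    ∃ i, p <:+ w.take i := by
  obtain ⟨s, t, rfl⟩ := h
  refine ⟨(s ++ p).length, ?_⟩
  rw [List.take_left]
  exact List.suffix_append s p

open Classical in
/-- End position of the first occurrence of `p` in `w`. -/
private noncomputable def minEnd (w p : List α) : ℕ :=
  if h : ∃ i, p <:+ w.take i then Nat.find h else 0

open Classical in
private lemma minEnd_suffix {w p : List α} (h : ∃ i, p <:+ w.take i) :
    p <:+ w.take (minEnd w p) := by
  rw [minEnd, dif_pos h]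
  exact Nat.find_spec h

open Classical in
private lemma minEnd_le {w p : List α} {i : ℕ} (hi : p <:+ w.take i) :
    minEnd w p ≤ i := by
  rw [minEnd, dif_pos ⟨i, hi⟩]
  exact Nat.find_le hi

open Classical in
private lemma minEnd_min {w p : List α} (h : ∃ i, p <:+ w.take i) {j : ℕ}
    (hj : j < minEnd w p) : ¬ p <:+ w.take j := by
  rw [minEnd, dif_pos h] at hj
  exact Nat.find_min h hj

private lemma minEnd_le_length {w p : List α} (h : p <:+: w) :
    minEnd w p ≤ w.length := by
  obtain ⟨s, t, rfl⟩ := h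
  have : p <:+ (s ++ p ++ t).take (s ++ p).length := by
    rw [List.take_left]; exact List.suffix_append s p
  exact (minEnd_le this).trans (by simp)

private lemma length_le_minEnd {w p : List α} (h : p <:+: w) :
    p.length ≤ minEnd w p := by
  have hs := minEnd_suffix (exists_suffix_take h)
  calc p.length ≤ (w.take (minEnd w p)).length := hs.length_le
    _ ≤ minEnd w p := by simp

/-- Key injectivity: distinct palindromic factors have distinct first-occurrence
end positions. -/
private lemma minEnd_inj {w : List α} (p q : List α)
    (hp : p <:+: w) (hq : q <:+: w) (hpp : p.reverse = p) (hqq : q.reverse = q)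
    (he : minEnd w p = minEnd w q) : p = q := by
  wlog hlen : p.length ≤ q.length with H
  · exact (H q p hq hp hqq hpp he.symm (le_of_not_ge hlen)).symm
  set i := minEnd w q with hi
  have hps : p <:+ w.take i := he ▸ minEnd_suffix (exists_suffix_take hp)
  have hqs : q <:+ w.take i := minEnd_suffix (exists_suffix_take hq)
  -- p is a suffix of q
  have hpq : p <:+ q := by
    have h1 : p.reverse <+: (w.take i).reverse := List.reverse_prefix.mpr hps
    have h2 : q.reverse <+: (w.take i).reverse := List.reverse_prefix.mpr hqs
    have := List.prefix_of_prefix_length_le h1 h2 (by simpa using hlen)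
    exact List.reverse_prefix.mp this
  obtain ⟨u, hu⟩ := hpq
  rcases eq_or_ne u [] with rfl | hne
  · simpa using hu
  · -- q = p ++ u.reverse, so p also occurs ending earlier: contradiction
    exfalso
    have hq2 : q = p ++ u.reverse := by
      conv_lhs => rw [← hqq, ← hu]
      simp [hpp]
    obtain ⟨v, hv⟩ := hqs
    have hilen : i ≤ w.length := he ▸ minEnd_le_length hp
    have hvlen : v.length + q.length = i := by
      have := congrArg List.length hv
      simpa [Nat.min_eq_left hilen] using this
    have hw : w.take i = (v ++ p) ++ u.reverse := by
      rw [← hv, hq2, List.append_assoc]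
    have hm : p <:+ w.take ((v ++ p).length) := by
      have : (w.take i).take ((v ++ p).length) = v ++ p := by
        rw [hw, List.take_left]
      rw [List.take_take] at this
      have hmin : min (v ++ p).length i = (v ++ p).length := by
        apply Nat.min_eq_left
        have : (v ++ p).length ≤ (w.take i).length := by
          rw [hw]; simp
        simpa [Nat.min_eq_left hilen] using this
      rw [hmin] at this
      rw [this]
      exact List.suffix_append v p
    have hlt : (v ++ p).length < i := by
      have hu0 : 0 < u.length := List.length_pos_iff.mpr hne
      have : q.length = u.length + p.length := by rw [← hu]; simp
      simp only [List.length_append]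
      omega
    exact minEnd_min ⟨i, hps⟩ (he ▸ hlt) hm

/-- Counting lemma: a set injecting into Icc a b is finite with ncard ≤ b+1-a. -/
private lemma ncard_aux {A : Set (List α)} {f : List α → ℕ} {a b : ℕ}
    (hinj : Set.InjOn f A) (hmaps : ∀ p ∈ A, f p ∈ Set.Icc a b) :
    A.Finite ∧ A.ncard ≤ b + 1 - a := by
  have himg : f '' A ⊆ Set.Icc a b := by
    rintro _ ⟨p, hp, rfl⟩; exact hmaps p hp
  have hfin' : (f '' A).Finite := (Set.finite_Icc a b).subset himg
  have hfin : A.Finite := Set.Finite.of_finite_image hfin' hinj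
  refine ⟨hfin, ?_⟩
  calc A.ncard = (f '' A).ncard := (Set.ncard_image_of_injOn hinj).symm
    _ ≤ (Set.Icc a b).ncard := Set.ncard_le_ncard himg (Set.finite_Icc a b)
    _ = b + 1 - a := by
        rw [Set.ncard_eq_toFinset_card', Set.toFinset_Icc, Nat.card_Icc]

end Stmt8Aux

/-- The number of distinct non-empty palindromes in a starlike tree with three
branches each of length n is at most 4n. -/
theorem stmt_8 {α : Type*} (n : ℕ) (b₁ b₂ b₃ : List α)
    (h₁ : b₁.length = n) (h₂ : b₂.length = n) (h₃ : b₃.length = n) :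
    {p : List α | p ≠ [] ∧ p.reverse = p ∧
        (p <:+: b₁.reverse ++ b₂ ∨ p <:+: b₁.reverse ++ b₃ ∨ p <:+: b₂.reverse ++ b₃)}.ncard ≤
      4 * n := by
  classical
  set w12 := b₁.reverse ++ b₂ with hw12
  set w13 := b₁.reverse ++ b₃ with hw13
  set w23 := b₂.reverse ++ b₃ with hw23
  have hr1 : b₁.reverse.length = n := by rw [List.length_reverse, h₁]
  have hr2 : b₂.reverse.length = n := by rw [List.length_reverse, h₂]
  have hl12 : w12.length = 2 * n := by simp [hw12, h₁, h₂]; ring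
  have hl13 : w13.length = 2 * n := by simp [hw13, h₁, h₃]; ring
  have hl23 : w23.length = 2 * n := by simp [hw23, h₂, h₃]; ring
  set A : Set (List α) := {p | p ≠ [] ∧ p.reverse = p ∧ p <:+: w12} with hA
  set B : Set (List α) := {p | (p ≠ [] ∧ p.reverse = p ∧ p <:+: w13) ∧ ¬ p <:+: w12} with hB
  set C : Set (List α) := {p | (p ≠ [] ∧ p.reverse = p ∧ p <:+: w23) ∧ ¬ p <:+: w12} with hC
  -- bound for A
  have hAinj : Set.InjOn (minEnd w12) A := by
    rintro p ⟨_, hpp, hpi⟩ q ⟨_, hqq, hqi⟩ he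
    exact minEnd_inj p q hpi hqi hpp hqq he
  have hAmaps : ∀ p ∈ A, minEnd w12 p ∈ Set.Icc 1 (2 * n) := by
    rintro p ⟨hne, _, hpi⟩
    refine ⟨?_, hl12 ▸ minEnd_le_length hpi⟩
    have := length_le_minEnd hpi
    have hp0 : 0 < p.length := List.length_pos_iff.mpr hne
    omega
  obtain ⟨hAfin, hAcard⟩ := ncard_aux hAinj hAmaps
  -- bound for B
  have hBinj : Set.InjOn (minEnd w13) B := by
    rintro p ⟨⟨_, hpp, hpi⟩, _⟩ q ⟨⟨_, hqq, hqi⟩, _⟩ he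
    exact minEnd_inj p q hpi hqi hpp hqq he
  have hBmaps : ∀ p ∈ B, minEnd w13 p ∈ Set.Icc (n + 1) (2 * n) := by
    rintro p ⟨⟨hne, hpp, hpi⟩, hnot⟩
    refine ⟨?_, hl13 ▸ minEnd_le_length hpi⟩
    by_contra hle
    push_neg at hle
    obtain ⟨k, hk⟩ : ∃ k, minEnd w13 p = k := ⟨_, rfl⟩
    have hle' : k ≤ n := by omega
    have hps : p <:+ w13.take k := hk ▸ minEnd_suffix (exists_suffix_take hpi)
    have heq : w13.take k = w12.take k := by
      rw [hw13, hw12, List.take_append_of_le_length (by rw [hr1]; omega),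
        List.take_append_of_le_length (by rw [hr1]; omega)]
    rw [heq] at hps
    exact hnot (hps.isInfix.trans (List.take_prefix _ _).isInfix)
  obtain ⟨hBfin, hBcard⟩ := ncard_aux hBinj hBmaps
  -- bound for C
  have hCinj : Set.InjOn (minEnd w23) C := by
    rintro p ⟨⟨_, hpp, hpi⟩, _⟩ q ⟨⟨_, hqq, hqi⟩, _⟩ he
    exact minEnd_inj p q hpi hqi hpp hqq he
  have hCmaps : ∀ p ∈ C, minEnd w23 p ∈ Set.Icc (n + 1) (2 * n) := by
    rintro p ⟨⟨hne, hpp, hpi⟩, hnot⟩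
    refine ⟨?_, hl23 ▸ minEnd_le_length hpi⟩
    by_contra hle
    push_neg at hle
    obtain ⟨k, hk⟩ : ∃ k, minEnd w23 p = k := ⟨_, rfl⟩
    have hle' : k ≤ n := by omega
    have hps : p <:+ w23.take k := hk ▸ minEnd_suffix (exists_suffix_take hpi)
    have heq : w23.take k = b₂.reverse.take k := by
      rw [hw23, List.take_append_of_le_length (by rw [hr2]; omega)]
    rw [heq] at hps
    have hrev : p <:+: b₂.reverse := hps.isInfix.trans (List.take_prefix _ _).isInfix
    have : p <:+: b₂ := by
      have := hrev.reverse
      rwa [hpp, List.reverse_reverse] at this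
    exact hnot (this.trans (List.suffix_append _ _).isInfix)
  obtain ⟨hCfin, hCcard⟩ := ncard_aux hCinj hCmaps
  -- assemble
  have hsub : {p : List α | p ≠ [] ∧ p.reverse = p ∧
      (p <:+: w12 ∨ p <:+: w13 ∨ p <:+: w23)} ⊆ A ∪ B ∪ C := by
    rintro p ⟨hne, hpp, hcase⟩
    by_cases h12 : p <:+: w12
    · exact Or.inl (Or.inl ⟨hne, hpp, h12⟩)
    · rcases hcase with h | h | h
      · exact absurd h h12
      · exact Or.inl (Or.inr ⟨⟨hne, hpp, h⟩, h12⟩)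
      · exact Or.inr ⟨⟨hne, hpp, h⟩, h12⟩
  calc {p : List α | p ≠ [] ∧ p.reverse = p ∧
        (p <:+: w12 ∨ p <:+: w13 ∨ p <:+: w23)}.ncard
      ≤ (A ∪ B ∪ C).ncard :=
        Set.ncard_le_ncard hsub ((hAfin.union hBfin).union hCfin)
    _ ≤ (A ∪ B).ncard + C.ncard := Set.ncard_union_le _ _
    _ ≤ A.ncard + B.ncard + C.ncard := by
        have := Set.ncard_union_le A B
        omega
    _ ≤ 4 * n := by omega
end

section
/- For every n ≥ 2, the starlike tree with three branches labelled a^n, b·a^{n-1}, and b·b·a^{n-2} over the binary alphabet {a,b} contains at least 4n - 2 distinct non-empty palindromes. -/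
open List

private lemma infix_key {α : Type*} (a b : α) (m1 m2 i k : ℕ) (h1 : k ≤ m1) (h2 : k ≤ m2) :
    (replicate k a ++ replicate i b ++ replicate k a) <:+:
      (replicate m1 a ++ replicate i b ++ replicate m2 a) := by
  have e1 : replicate m1 a = replicate (m1 - k) a ++ replicate k a := by
    rw [← List.replicate_add]; congr 1; omega
  have e2 : replicate m2 a = replicate k a ++ replicate (m2 - k) a := by
    rw [← List.replicate_add]; congr 1; omega
  refine ⟨replicate (m1 - k) a, replicate (m2 - k) a, ?_⟩
  rw [e1, e2]
  simp only [List.append_assoc]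

/-- For every n ≥ 2, the starlike tree with three branches labelled a^n, b·a^{n-1},
and b·b·a^{n-2} over the binary alphabet {a,b} contains at least 4n - 2 distinct
non-empty palindromes. -/
theorem stmt_12 {α : Type*} (a b : α) (hab : a ≠ b) (n : ℕ) (hn : 2 ≤ n) :
    4 * n - 2 ≤
      {p : List α | p ≠ [] ∧ p.reverse = p ∧
        (p <:+: (List.replicate n a).reverse ++ (b :: List.replicate (n - 1) a) ∨
         p <:+: (List.replicate n a).reverse ++ (b :: b :: List.replicate (n - 2) a) ∨
         p <:+: (b :: List.replicate (n - 1) a).reverse ++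
           (b :: b :: List.replicate (n - 2) a))}.ncard := by
  classical
  set S : Set (List α) := {p : List α | p ≠ [] ∧ p.reverse = p ∧
        (p <:+: (List.replicate n a).reverse ++ (b :: List.replicate (n - 1) a) ∨
         p <:+: (List.replicate n a).reverse ++ (b :: b :: List.replicate (n - 2) a) ∨
         p <:+: (b :: List.replicate (n - 1) a).reverse ++
           (b :: b :: List.replicate (n - 2) a))} with hS
  set L1 : List α := replicate n a ++ replicate 1 b ++ replicate (n - 1) a with hL1
  set L2 : List α := replicate n a ++ replicate 2 b ++ replicate (n - 2) a with hL2
  set L3 : List α := replicate (n - 1) a ++ replicate 3 b ++ replicate (n - 2) a with hL3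
  have hSL : S = {p : List α | p ≠ [] ∧ p.reverse = p ∧
      (p <:+: L1 ∨ p <:+: L2 ∨ p <:+: L3)} := by
    have e1 : (List.replicate n a).reverse ++ (b :: List.replicate (n - 1) a) = L1 := by
      simp [hL1, List.reverse_replicate, List.replicate_succ]
    have e2 : (List.replicate n a).reverse ++ (b :: b :: List.replicate (n - 2) a) = L2 := by
      simp [hL2, List.reverse_replicate, List.replicate_succ]
    have e3 : (b :: List.replicate (n - 1) a).reverse ++ (b :: b :: List.replicate (n - 2) a)
        = L3 := by
      simp [hL3, List.reverse_replicate, List.replicate_succ, List.append_assoc]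
    rw [hS, e1, e2, e3]
  set g : ℕ → ℕ → List α := fun i k =>
    if i = 0 then replicate k a else replicate k a ++ replicate i b ++ replicate k a with hg
  set K : ℕ → Finset ℕ := fun i =>
    if i = 0 then Finset.Icc 1 n else if i = 1 then Finset.range n
    else Finset.range (n - 1) with hK
  set D : Finset (Σ _ : ℕ, ℕ) := (Finset.range 4).sigma K with hD
  set T : Finset (List α) := D.image (fun p => g p.1 p.2) with hT
  have hcount : ∀ i k, (g i k).count b = i := by
    intro i k
    by_cases h : i = 0 <;> simp [hg, h, List.count_replicate, hab, hab.symm]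
  have hlen : ∀ i k, (g i k).length = if i = 0 then k else k + i + k := by
    intro i k
    by_cases h : i = 0 <;> simp [hg, h]; omega
  have hinj : Set.InjOn (fun p : Σ _ : ℕ, ℕ => g p.1 p.2) D := by
    rintro ⟨i, k⟩ - ⟨j, l⟩ - h
    simp only at h
    have h1 : i = j := by rw [← hcount i k, ← hcount j l, h]
    subst h1
    have h2 := hlen i k
    rw [h, hlen] at h2
    have : k = l := by split_ifs at h2 <;> omega
    subst this; rfl
  have hcardT : T.card = 4 * n - 2 := by
    rw [hT, Finset.card_image_of_injOn hinj, hD, Finset.card_sigma]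
    have : (Finset.range 4) = {0, 1, 2, 3} := by decide
    rw [this]
    simp [hK, Nat.card_Icc]
    omega
  have hsub : ↑T ⊆ S := by
    rw [hSL]
    intro p hp
    simp only [hT, Finset.coe_image, Set.mem_image, Finset.mem_coe, hD,
      Finset.mem_sigma, Finset.mem_range] at hp
    obtain ⟨⟨i, k⟩, ⟨hi4, hk⟩, rfl⟩ := hp
    simp only at hi4 hk ⊢
    have hk' : (i = 0 ∧ 1 ≤ k ∧ k ≤ n) ∨ (i = 1 ∧ k < n) ∨ ((i = 2 ∨ i = 3) ∧ k < n - 1) := by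
      simp only [hK] at hk
      split_ifs at hk with h1 h2
      · simp only [Finset.mem_Icc] at hk; tauto
      · simp only [Finset.mem_range] at hk; tauto
      · simp only [Finset.mem_range] at hk
        have : i = 2 ∨ i = 3 := by omega
        tauto
    refine ⟨?_, ?_, ?_⟩
    · intro h
      have h0 := congrArg List.length h
      rw [hlen] at h0
      simp only [List.length_nil] at h0
      rcases hk' with ⟨hi, h1, -⟩ | ⟨hi, h1⟩ | ⟨hi | hi, h1⟩ <;> subst hi <;>
        first
        | (rw [if_pos rfl] at h0; omega)
        | (rw [if_neg (by omega)] at h0; omega)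
    · by_cases h : i = 0
      · simp [hg, h, List.reverse_replicate]
      · simp [hg, h, List.reverse_append, List.reverse_replicate, List.append_assoc]
    · rcases hk' with ⟨hi, hk1, hk2⟩ | ⟨hi, hk1⟩ | ⟨hi, hk1⟩
      · subst hi
        left
        refine ⟨[], replicate (n - k) a ++ replicate 1 b ++ replicate (n-1) a, ?_⟩
        have e1 : replicate n a = replicate k a ++ replicate (n - k) a := by
          rw [← List.replicate_add]; congr 1; omega
        have hgv : g 0 k = replicate k a := by simp [hg]
        rw [hgv, hL1, e1]
        simp only [List.nil_append, List.append_assoc]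
      · subst hi
        left
        have hgv : g 1 k = replicate k a ++ replicate 1 b ++ replicate k a := by simp [hg]
        rw [hgv, hL1]
        exact infix_key a b n (n-1) 1 k (by omega) (by omega)
      · rcases hi with hi | hi <;> subst hi
        · right; left
          have hgv : g 2 k = replicate k a ++ replicate 2 b ++ replicate k a := by simp [hg]
          rw [hgv, hL2]
          exact infix_key a b n (n-2) 2 k (by omega) (by omega)
        · right; right
          have hgv : g 3 k = replicate k a ++ replicate 3 b ++ replicate k a := by simp [hg]
          rw [hgv, hL3]
          exact infix_key a b (n-1) (n-2) 3 k (by omega) (by omega)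
  have hfin : S.Finite := by
    rw [hSL]
    apply Set.Finite.subset (Set.Finite.union (Set.Finite.union L1.sublists.finite_toSet
      L2.sublists.finite_toSet) L3.sublists.finite_toSet)
    rintro p ⟨-, -, h | h | h⟩
    · exact Or.inl (Or.inl (by simpa using h.sublist))
    · exact Or.inl (Or.inr (by simpa using h.sublist))
    · exact Or.inr (by simpa using h.sublist)
  calc 4 * n - 2 = T.card := hcardT.symm
    _ = (↑T : Set (List α)).ncard := (Set.ncard_coe_finset T).symm
    _ ≤ S.ncard := Set.ncard_le_ncard hsub hfin
end

section
/- For any words u and v over a common alphabet, the number of distinct non-empty palindromic factors of the concatenation u·v that do not occur as factors of u is at most |v|. -/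
/-- For any words u and v, the number of distinct non-empty palindromic factors of
u·v that do not occur as factors of u is at most |v|. -/
theorem stmt_13 {α : Type*} (u v : List α) :
    {p : List α | p ≠ [] ∧ p.reverse = p ∧ p <:+: u ++ v ∧ ¬ p <:+: u}.ncard ≤
      v.length := by
  classical
  set S := {p : List α | p ≠ [] ∧ p.reverse = p ∧ p <:+: u ++ v ∧ ¬ p <:+: u} with hS
  set w := u ++ v with hw
  have key : ∀ p ∈ S, ∃ k, 1 ≤ k ∧ k ≤ v.length ∧ p <:+ w.take (u.length + k) := by
    rintro p ⟨hne, hpal, hinf, hnot⟩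
    obtain ⟨s, t, hst⟩ := hinf
    have hpre : s ++ p <+: w := ⟨t, by simpa [List.append_assoc] using hst⟩
    have hlen : s.length + p.length ≤ w.length := by
      have := hpre.length_le; simpa using this
    have hm : u.length < s.length + p.length := by
      by_contra h
      push_neg at h
      have hpu : s ++ p <+: u := by
        refine List.prefix_of_prefix_length_le hpre (List.prefix_append u v) ?_
        simpa using h
      exact hnot (((List.suffix_append s p).isInfix).trans hpu.isInfix)
    have hwlen : w.length = u.length + v.length := by simp [hw]
    refine ⟨s.length + p.length - u.length, by omega, by omega, ?_⟩
    have h1 : u.length + (s.length + p.length - u.length) = s.length + p.length := by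
      omega
    rw [h1]
    have h2 : w.take (s.length + p.length) = s ++ p := by
      have := List.prefix_iff_eq_take.mp hpre
      simpa using this.symm
    rw [h2]
    exact List.suffix_append s p
  have main : ∀ p, ∀ hp : p ∈ S, ∀ q, ∀ hq : q ∈ S, p <:+ q →
      Nat.find (key p hp) = Nat.find (key q hq) → p = q := by
    intro p hp q hq hsuf hk
    by_contra hne
    obtain ⟨hk1, hk2, _⟩ := Nat.find_spec (key p hp)
    have hqs : q <:+ w.take (u.length + Nat.find (key p hp)) := by
      rw [hk]; exact (Nat.find_spec (key q hq)).2.2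
    have hppre : p <+: q := by
      have h := List.reverse_prefix.mpr hsuf
      rwa [hp.2.1, hq.2.1] at h
    obtain ⟨t, ht⟩ := hppre
    have htne : t ≠ [] := by rintro rfl; simp at ht; exact hne ht
    obtain ⟨s, hs⟩ := hqs
    have hsp : s ++ p <+: w := by
      have h1 : s ++ p <+: w.take (u.length + Nat.find (key p hp)) :=
        ⟨t, by rw [← hs, ← ht]; simp [List.append_assoc]⟩
      exact h1.trans (List.take_prefix _ _)
    have hmlt : s.length + p.length < u.length + Nat.find (key p hp) := by
      have h2 : s.length + q.length ≤ u.length + Nat.find (key p hp) := by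
        have h3 := congrArg List.length hs
        simp only [List.length_append, List.length_take] at h3
        omega
      have h4 : p.length < q.length := by
        have h5 := congrArg List.length ht
        simp only [List.length_append] at h5
        have h6 : t.length ≠ 0 := by simpa using htne
        omega
      omega
    have hmu : u.length < s.length + p.length := by
      by_contra h
      push_neg at h
      have hpu : s ++ p <+: u := by
        refine List.prefix_of_prefix_length_le hsp (List.prefix_append u v) ?_
        simpa using h
      exact hp.2.2.2 (((List.suffix_append s p).isInfix).trans hpu.isInfix)
    set k' := s.length + p.length - u.length with hk'
    have hsfx : p <:+ w.take (u.length + k') := by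
      have h1 : u.length + k' = s.length + p.length := by omega
      rw [h1]
      have h2 : w.take (s.length + p.length) = s ++ p := by
        have := List.prefix_iff_eq_take.mp hsp
        simpa using this.symm
      rw [h2]
      exact List.suffix_append s p
    exact Nat.find_min (key p hp) (show k' < Nat.find (key p hp) by omega)
      ⟨by omega, by omega, hsfx⟩
  have hpos : ∀ p : S, Nat.find (key p.1 p.2) - 1 < v.length := by
    intro p
    obtain ⟨hk1, hk2, _⟩ := Nat.find_spec (key p.1 p.2)
    omega
  have hinj : Function.Injective
      (fun p : S => (⟨Nat.find (key p.1 p.2) - 1, hpos p⟩ : Fin v.length)) := by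
    rintro ⟨p, hp⟩ ⟨q, hq⟩ hpq
    simp only [Fin.mk.injEq] at hpq
    have hk : Nat.find (key p hp) = Nat.find (key q hq) := by
      have h1 := (Nat.find_spec (key p hp)).1
      have h2 := (Nat.find_spec (key q hq)).1
      omega
    have hps := (Nat.find_spec (key p hp)).2.2
    have hqs : q <:+ w.take (u.length + Nat.find (key p hp)) := by
      rw [hk]; exact (Nat.find_spec (key q hq)).2.2
    rcases List.suffix_or_suffix_of_suffix hps hqs with h | h
    · exact Subtype.ext (main p hp q hq h hk)
    · exact Subtype.ext ((main q hq p hp h hk.symm).symm)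
  calc S.ncard = Nat.card S := (Nat.card_coe_set_eq S).symm
    _ ≤ Nat.card (Fin v.length) := Nat.card_le_card_of_injective _ hinj
    _ = v.length := by simp
end

section
/- For any words u and v, the number of distinct non-empty palindromic factors of u·v is at most |u| + |v|. -/
/-!
Appending a letter `a` to a word `w` creates at most one new palindromic factor. A new one is
a suffix of `w ++ [a]`, and of two distinct new ones the shorter `p` is a suffix, hence (both
being palindromes) a proper prefix, of the longer `q = t ++ [a]`; so `p` is a prefix of `t`,
which is a factor of `w`, and `p` was not new. Induction on the length of the word concludes.
-/

namespace List

variable {α : Type*}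

def palindromicFactors (w : List α) : Set (List α) :=
  {p | p ≠ [] ∧ p.reverse = p ∧ p <:+: w}

theorem finite_setOf_infix (w : List α) : {p | p <:+: w}.Finite :=
  (List.finite_toSet w.sublists).subset fun _ hp => mem_sublists.mpr hp.sublist

theorem palindromicFactors_finite (w : List α) : (palindromicFactors w).Finite :=
  (finite_setOf_infix w).subset fun _ hp => hp.2.2

@[simp]
theorem palindromicFactors_nil : palindromicFactors ([] : List α) = ∅ :=
  Set.eq_empty_of_forall_notMem fun _ ⟨hp0, _, hp⟩ => hp0 (infix_nil.mp hp)

theorem IsSuffix.isPrefix_of_reverse_eq {p q : List α} (h : p <:+ q) (hp : p.reverse = p)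
    (hq : q.reverse = q) : p <+: q := by
  rw [← hp, ← hq]
  exact reverse_prefix.mpr h

theorem eq_of_suffix_of_reverse_eq_of_not_infix {w p q : List α} {a : α}
    (hpq : p <:+ q) (hqs : q <:+ w ++ [a]) (hp : p.reverse = p) (hq : q.reverse = q)
    (hpw : ¬ p <:+: w) : p = q := by
  obtain rfl | ⟨t, rfl, htw⟩ := suffix_concat_iff.mp hqs
  · exact suffix_nil.mp hpq
  obtain hpt | hpt := prefix_concat_iff.mp (hpq.isPrefix_of_reverse_eq hp hq)
  · exact hpt
  · exact absurd (hpt.isInfix.trans htw.isInfix) hpw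

theorem mem_palindromicFactors_concat_diff {w p : List α} {a : α}
    (h : p ∈ palindromicFactors (w ++ [a]) \ palindromicFactors w) :
    p.reverse = p ∧ p <:+ w ++ [a] ∧ ¬ p <:+: w := by
  obtain ⟨⟨hp0, hp, hpa⟩, hpw⟩ := h
  have hpw' : ¬ p <:+: w := fun h => hpw ⟨hp0, hp, h⟩
  exact ⟨hp, (infix_concat_iff.mp hpa).resolve_right hpw', hpw'⟩

theorem subsingleton_palindromicFactors_concat_diff (w : List α) (a : α) :
    (palindromicFactors (w ++ [a]) \ palindromicFactors w).Subsingleton := by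
  intro p hp q hq
  obtain ⟨hp, hps, hpw⟩ := mem_palindromicFactors_concat_diff hp
  obtain ⟨hq, hqs, hqw⟩ := mem_palindromicFactors_concat_diff hq
  obtain hpq | hqp := suffix_or_suffix_of_suffix hps hqs
  · exact eq_of_suffix_of_reverse_eq_of_not_infix hpq hqs hp hq hpw
  · exact (eq_of_suffix_of_reverse_eq_of_not_infix hqp hps hq hp hqw).symm

theorem ncard_palindromicFactors_le_length (w : List α) :
    (palindromicFactors w).ncard ≤ w.length := by
  induction w using reverseRecOn with
  | nil => simp
  | append_singleton w a ih =>
    calc (palindromicFactors (w ++ [a])).ncard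
        ≤ (palindromicFactors w ∪ (palindromicFactors (w ++ [a]) \ palindromicFactors w)).ncard :=
          Set.ncard_le_ncard (Set.sdiff_subset_iff.mp subset_rfl)
            ((palindromicFactors_finite w).union (palindromicFactors_finite _).sdiff)
      _ ≤ (palindromicFactors w).ncard
            + (palindromicFactors (w ++ [a]) \ palindromicFactors w).ncard :=
          Set.ncard_union_le _ _
      _ ≤ w.length + 1 :=
          add_le_add ih <| (Set.ncard_le_one (palindromicFactors_finite _).sdiff).mpr <|
            subsingleton_palindromicFactors_concat_diff w a
      _ = (w ++ [a]).length := by simp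

end List

/-- For any words u and v, the number of distinct non-empty palindromic factors of
u·v is at most |u| + |v|. -/
theorem stmt_14 {α : Type*} (u v : List α) :
    {p : List α | p ≠ [] ∧ p.reverse = p ∧ p <:+: u ++ v}.ncard ≤
      u.length + v.length := by
  exact List.length_append ▸ (u ++ v).ncard_palindromicFactors_le_length
end

section
/- If a word u of length m is a factor of a word w ending at position i ≤ n and u is a palindrome that also has an occurrence in w ending at some earlier position j < i, then u is not counted as a new palindrome at position i; consequently, the map sending each distinct palindromic factor of w to the ending position of its first occurrence is injective. -/
lemma stmt_16_aux {α : Type*} (w p : List α) (hne : p ≠ []) (hinfix : p <:+: w) :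
    sInf {i : ℕ | p <:+ w.take i} ∈ Set.Icc 1 w.length ∧
    p <:+ w.take (sInf {i : ℕ | p <:+ w.take i}) := by
  obtain ⟨s, t, hw⟩ := hinfix
  have hmem : s.length + p.length ∈ {i : ℕ | p <:+ w.take i} := by
    have : w.take (s.length + p.length) = s ++ p := by
      rw [← hw]; exact List.take_left' (by simp)
    simp only [Set.mem_setOf_eq, this]
    exact List.suffix_append s p
  have hinf := Nat.sInf_mem ⟨_, hmem⟩
  refine ⟨⟨?_, ?_⟩, hinf⟩
  · rcases Nat.eq_zero_or_pos (sInf {i : ℕ | p <:+ w.take i}) with h0 | h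
    · rw [h0] at hinf
      simp only [Set.mem_setOf_eq, List.take_zero] at hinf
      exact absurd (List.suffix_nil.mp hinf) hne
    · exact h
  · calc sInf {i : ℕ | p <:+ w.take i} ≤ s.length + p.length := Nat.sInf_le hmem
      _ ≤ w.length := by rw [← hw]; simp

lemma stmt_16_key {α : Type*} (w p q : List α) (hpne : p ≠ []) (hppal : p.reverse = p)
    (hpinf : p <:+: w) (hqne : q ≠ []) (hqpal : q.reverse = q) (hqinf : q <:+: w)
    (hlen : p.length ≤ q.length)
    (heq : sInf {i : ℕ | p <:+ w.take i} = sInf {i : ℕ | q <:+ w.take i}) : p = q := by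
  obtain ⟨⟨-, hple⟩, hpocc⟩ := stmt_16_aux w p hpne hpinf
  obtain ⟨-, hqocc⟩ := stmt_16_aux w q hqne hqinf
  set i := sInf {i : ℕ | q <:+ w.take i} with hi
  rw [heq] at hpocc hple
  -- p is a suffix of q (both end at position i, p is shorter)
  have hpq : p <:+ q := List.suffix_of_suffix_length_le hpocc hqocc hlen
  -- p is also a prefix of q (both are palindromes)
  have hpq' : p <+: q := by
    have h := List.reverse_prefix.mpr hpq
    rwa [hppal, hqpal] at h
  obtain ⟨t, ht⟩ := hpq'
  obtain ⟨s, hs⟩ := hqocc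
  -- the take at i has length i
  have hilen : s.length + q.length = i := by
    have := congrArg List.length hs
    simpa [List.length_take, Nat.min_eq_left hple] using this
  -- p occurs ending at position s.length + p.length
  have hmem : s.length + p.length ∈ {j : ℕ | p <:+ w.take j} := by
    have h1 : s.length + p.length ≤ i := by omega
    have h2 : w.take (s.length + p.length) = s ++ p := by
      have : (w.take i).take (s.length + p.length) = w.take (s.length + p.length) := by
        rw [List.take_take, Nat.min_eq_left h1]
      rw [← this, ← hs, ← ht, ← List.append_assoc]
      exact List.take_left' (by simp)
    simp only [Set.mem_setOf_eq, h2]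
    exact List.suffix_append s p
  -- minimality of i forces q.length ≤ p.length
  have := Nat.sInf_le hmem
  rw [← heq] at hi
  have hle : q.length ≤ p.length := by omega
  exact List.IsSuffix.eq_of_length_le hpq hle

/-- The map sending each distinct non-empty palindromic factor of w to the ending
position of its first occurrence is an injection into {1, ..., n}. -/
theorem stmt_16 {α : Type*} (w : List α) :
    Set.MapsTo (fun p : List α => sInf {i : ℕ | p <:+ w.take i})
      {p : List α | p ≠ [] ∧ p.reverse = p ∧ p <:+: w}
      (Set.Icc 1 w.length) ∧
    Set.InjOn (fun p : List α => sInf {i : ℕ | p <:+ w.take i})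
      {p : List α | p ≠ [] ∧ p.reverse = p ∧ p <:+: w} := by
  constructor
  · intro p hp
    exact (stmt_16_aux w p hp.1 hp.2.2).1
  · intro p hp q hq heq
    simp only [Set.mem_setOf_eq] at hp hq
    rcases le_total p.length q.length with h | h
    · exact stmt_16_key w p q hp.1 hp.2.1 hp.2.2 hq.1 hq.2.1 hq.2.2 h heq
    · exact (stmt_16_key w q p hq.1 hq.2.1 hq.2.2 hp.1 hp.2.1 hp.2.2 h heq.symm).symm
end
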